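/- Let a, b : {1, 2, 3, …} → ℂ be sequences such that ∑_{n=1}^∞ |a_n b_n| / n < ∞. For a partition μ = (μ_1 ≥ μ_2 ≥ ⋯ ≥ μ_ℓ > 0) (of any nonnegative integer, including the empty partition), set a_μ = ∏_{i=1}^{ℓ} a_{μ_i}, b_μ = ∏_{i=1}^{ℓ} b_{μ_i}, and z_μ = ∏_{i ≥ 1} i^{m_i} · m_i!, where m_i is the number of parts of μ equal to i. Then the family ( a_μ b_μ / z_μ ), indexed by the set of all partitions of all nonnegative integers, is summable, and ∑_μ a_μ b_μ / z_μ = exp( ∑_{n=1}^∞ a_n b_n / n ). -/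

import Mathlib

/-- For a sequence `a : ℕ → ℂ` (with `a n` only used for `n ≥ 1`) and a
partition `μ` of `m`, the product `a_μ = ∏_{i=1}^{ℓ(μ)} a_{μ_i}` over the
parts of `μ` (equal to `1` for the empty partition). -/
noncomputable def partProd (a : ℕ → ℂ) {m : ℕ} (μ : m.Partition) : ℂ :=
  (μ.parts.map a).prod

/-- `z_μ = ∏_{i≥1} i^{m_i} · m_i!`, where `m_i` is the number of parts of the
partition `μ` equal to `i` (so `z_∅ = 1`). -/
def zPart {m : ℕ} (μ : m.Partition) : ℕ :=
  ∏ i ∈ μ.parts.toFinset, i ^ (μ.parts.count i) * (μ.parts.count i).factorial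


open Finset Filter Topology

section Aux
variable {K : Type*} [NormedField K] [CompleteSpace K]

/-- product of `u i (d i)` over the support of a finsupp. -/
noncomputable def fProd (u : ℕ → ℕ → K) (d : ℕ →₀ ℕ) : K := d.prod fun i e => u i e

/-- split off the coordinate `a`. -/
noncomputable def insertEquiv (a : ℕ) (s : Finset ℕ) (ha : a ∉ s) :
    {d : ℕ →₀ ℕ // d.support ⊆ insert a s} ≃ ℕ × {d : ℕ →₀ ℕ // d.support ⊆ s} where
  toFun d := (d.1 a, ⟨d.1.erase a, by
    intro x hx
    rw [Finsupp.support_erase, Finset.mem_erase] at hx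
    rcases Finset.mem_insert.1 (d.2 hx.2) with h | h
    · exact absurd h hx.1
    · exact h⟩)
  invFun p := ⟨Finsupp.single a p.1 + p.2.1, by
    intro x hx
    rcases Finset.mem_union.1 (Finsupp.support_add hx) with h | h
    · exact Finset.mem_insert.2 (Or.inl (Finset.mem_singleton.1 (Finsupp.support_single_subset h)))
    · exact Finset.mem_insert.2 (Or.inr (p.2.2 h))⟩
  left_inv d := Subtype.ext (Finsupp.single_add_erase a d.1)
  right_inv p := by
    obtain ⟨n, d⟩ := p
    have ha2 : a ∉ d.1.support := fun hmem => ha (d.2 hmem)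
    have hpa : d.1 a = 0 := Finsupp.notMem_support_iff.1 ha2
    simp only [Prod.mk.injEq]
    refine ⟨by simp [hpa], Subtype.ext ?_⟩
    show Finsupp.erase a (Finsupp.single a n + d.1) = d.1
    rw [Finsupp.erase_add, Finsupp.erase_single, zero_add,
      Finsupp.erase_of_notMem_support ha2]

lemma fProd_split {a : ℕ} {s : Finset ℕ} (ha : a ∉ s) (u : ℕ → ℕ → K)
    (hu0 : ∀ i, u i 0 = 1) (n : ℕ) (d : {d : ℕ →₀ ℕ // d.support ⊆ s}) :
    fProd u (Finsupp.single a n + d.1) = u a n * fProd u d.1 := by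
  have hdisj : Disjoint (Finsupp.single a n).support d.1.support := by
    refine Finset.disjoint_left.2 fun x hx hx' => ?_
    rw [Finset.mem_singleton.1 (Finsupp.support_single_subset hx)] at hx'
    exact ha (d.2 hx')
  rw [fProd, Finsupp.prod_add_index_of_disjoint hdisj, Finsupp.prod_single_index (hu0 a)]
  rfl

lemma insertEquiv_symm_val (a : ℕ) (s : Finset ℕ) (ha : a ∉ s)
    (p : ℕ × {d : ℕ →₀ ℕ // d.support ⊆ s}) :
    ((insertEquiv a s ha).symm p).1 = Finsupp.single a p.1 + p.2.1 := rfl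

set_option maxHeartbeats 1000000 in
lemma hasSum_fProd (u : ℕ → ℕ → K) (hu0 : ∀ i, u i 0 = 1)
    (hu : ∀ i, Summable fun e => ‖u i e‖) (s : Finset ℕ) :
    HasSum (fun d : {d : ℕ →₀ ℕ // d.support ⊆ s} => fProd u d.1)
      (∏ i ∈ s, ∑' e, u i e) ∧
    Summable (fun d : {d : ℕ →₀ ℕ // d.support ⊆ s} => ‖fProd u d.1‖) := by
  classical
  induction s using Finset.induction_on with
  | empty =>
    haveI : Unique {d : ℕ →₀ ℕ // d.support ⊆ (∅ : Finset ℕ)} :=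
      { default := ⟨0, by simp⟩
        uniq := fun d => Subtype.ext (Finsupp.support_eq_empty.1
          (Finset.subset_empty.1 d.2)) }
    have h1 : ∀ d : {d : ℕ →₀ ℕ // d.support ⊆ (∅ : Finset ℕ)}, fProd u d.1 = (1 : K) := by
      intro d
      have hd : d.1 = 0 := Finsupp.support_eq_empty.1 (Finset.subset_empty.1 d.2)
      rw [fProd, hd]
      exact Finsupp.prod_zero_index
    constructor
    · have hs := hasSum_fintype (fun d : {d : ℕ →₀ ℕ // d.support ⊆ (∅ : Finset ℕ)} =>
        fProd u d.1)
      rw [Fintype.sum_unique, h1 default] at hs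
      simpa using hs
    · exact (hasSum_fintype _).summable
  | @insert a s ha ih =>
    obtain ⟨ih1, ih2⟩ := ih
    have key : ∀ p : ℕ × {d : ℕ →₀ ℕ // d.support ⊆ s},
        fProd u ((insertEquiv a s ha).symm p).1 = u a p.1 * fProd u p.2.1 := by
      intro p
      rw [insertEquiv_symm_val]
      exact fProd_split ha u hu0 p.1 p.2
    have hexp : HasSum (fun e => u a e) (∑' e, u a e) := ((hu a).of_norm).hasSum
    have hnorm : Summable fun p : ℕ × {d : ℕ →₀ ℕ // d.support ⊆ s} =>
        ‖u a p.1‖ * ‖fProd u p.2.1‖ :=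
      (hu a).mul_of_nonneg ih2 (fun _ => norm_nonneg _) (fun _ => norm_nonneg _)
    have hmulsum : Summable fun p : ℕ × {d : ℕ →₀ ℕ // d.support ⊆ s} =>
        u a p.1 * fProd u p.2.1 :=
      Summable.of_norm ((hnorm.congr fun p => (norm_mul _ _).symm))
    have hmul : HasSum (fun p : ℕ × {d : ℕ →₀ ℕ // d.support ⊆ s} =>
        u a p.1 * fProd u p.2.1)
        ((∑' e, u a e) * ∏ i ∈ s, ∑' e, u i e) :=
      HasSum.mul (f := fun e => u a e)
        (g := fun d : {d : ℕ →₀ ℕ // d.support ⊆ s} => fProd u d.1) hexp ih1 hmulsum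
    constructor
    · rw [Finset.prod_insert ha]
      refine (Equiv.hasSum_iff (insertEquiv a s ha).symm).1 ?_
      have hfe : ((fun d : {d : ℕ →₀ ℕ // d.support ⊆ insert a s} => fProd u d.1) ∘
          (insertEquiv a s ha).symm) = fun p => u a p.1 * fProd u p.2.1 :=
        funext key
      rw [hfe]
      exact hmul
    · refine (Equiv.summable_iff (insertEquiv a s ha).symm).1 ?_
      exact hnorm.congr fun p => by
        show ‖u a p.1‖ * ‖fProd u p.2.1‖ = ‖fProd u ((insertEquiv a s ha).symm p).1‖
        rw [key p, norm_mul]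
end Aux

section Main
variable (c : ℕ → ℂ)

noncomputable def uC : ℕ → ℕ → ℂ := fun i e => c i ^ e / (e.factorial : ℂ)
noncomputable def uR : ℕ → ℕ → ℝ := fun i e => ‖c i‖ ^ e / (e.factorial : ℝ)

lemma uC_zero (i : ℕ) : uC c i 0 = 1 := by simp [uC]
lemma uR_zero (i : ℕ) : uR c i 0 = 1 := by simp [uR]

lemma uC_summable (i : ℕ) : Summable fun e => ‖uC c i e‖ :=
  NormedSpace.norm_expSeries_div_summable (c i)

lemma uR_summable (i : ℕ) : Summable fun e => ‖uR c i e‖ :=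
  NormedSpace.norm_expSeries_div_summable ‖c i‖

lemma uC_tsum (i : ℕ) : ∑' e, uC c i e = Complex.exp (c i) := by
  rw [Complex.exp_eq_exp_ℂ]
  exact (NormedSpace.expSeries_div_hasSum_exp (c i)).tsum_eq

lemma uR_tsum (i : ℕ) : ∑' e, uR c i e = Real.exp ‖c i‖ := by
  rw [Real.exp_eq_exp_ℝ]
  exact (NormedSpace.expSeries_div_hasSum_exp ‖c i‖).tsum_eq

lemma norm_fProd (d : ℕ →₀ ℕ) : ‖fProd (uC c) d‖ = fProd (uR c) d := by
  rw [fProd, fProd, Finsupp.prod, Finsupp.prod, norm_prod]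
  refine Finset.prod_congr rfl fun i _ => ?_
  simp [uC, uR, norm_div, norm_pow, Complex.norm_natCast]

lemma summable_norm_fProd (hc : Summable fun n => ‖c n‖) :
    Summable fun d : ℕ →₀ ℕ => ‖fProd (uC c) d‖ := by
  refine summable_of_sum_le (c := Real.exp (∑' n, ‖c n‖))
    (fun d => norm_nonneg _) fun F => ?_
  set s : Finset ℕ := F.sup Finsupp.support with hs
  have hR := hasSum_fProd (uR c) (uR_zero c) (uR_summable c) s
  have hinj : Function.Injective
      (fun x : {x // x ∈ F} =>
        (⟨x.1, Finset.le_sup x.2⟩ : {d : ℕ →₀ ℕ // d.support ⊆ s})) := by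
    intro x y hxy
    have h' := congrArg Subtype.val hxy
    exact Subtype.ext h'
  calc ∑ d ∈ F, ‖fProd (uC c) d‖
      = ∑ x ∈ F.attach.map ⟨_, hinj⟩, fProd (uR c) x.1 := by
        rw [Finset.sum_map]
        simp only [Function.Embedding.coeFn_mk]
        rw [← Finset.sum_attach F fun d => ‖fProd (uC c) d‖]
        exact Finset.sum_congr rfl fun x _ => norm_fProd c x.1
    _ ≤ ∑' d : {d : ℕ →₀ ℕ // d.support ⊆ s}, fProd (uR c) d.1 := by
        refine Summable.sum_le_tsum _ (fun d _ => ?_) hR.1.summable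
        rw [← norm_fProd c d.1]; exact norm_nonneg _
    _ = ∏ i ∈ s, ∑' e, uR c i e := hR.1.tsum_eq
    _ = ∏ i ∈ s, Real.exp ‖c i‖ := Finset.prod_congr rfl fun i _ => uR_tsum c i
    _ = Real.exp (∑ i ∈ s, ‖c i‖) := (Real.exp_sum s _).symm
    _ ≤ Real.exp (∑' n, ‖c n‖) :=
        Real.exp_le_exp.2 (Summable.sum_le_tsum s (fun i _ => norm_nonneg _) hc)

lemma tendsto_partial_sums (hc : Summable fun n => ‖c n‖) :
    Tendsto (fun s : Finset ℕ =>
        ∑' d : {d : ℕ →₀ ℕ // d.support ⊆ s}, fProd (uC c) d.1)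
      atTop (𝓝 (∑' d : ℕ →₀ ℕ, fProd (uC c) d)) := by
  have hT : Summable fun d : ℕ →₀ ℕ => ‖fProd (uC c) d‖ := summable_norm_fProd c hc
  have hTs : Summable fun d : ℕ →₀ ℕ => fProd (uC c) d := hT.of_norm
  rw [Metric.tendsto_nhds]
  intro ε hε
  obtain ⟨F, hF⟩ : ∃ F : Finset (ℕ →₀ ℕ),
      ∑' d : {x : ℕ →₀ ℕ // x ∉ F}, ‖fProd (uC c) d.1‖ < ε :=
    ((tendsto_order.1 (tendsto_tsum_compl_atTop_zero
      (fun d : ℕ →₀ ℕ => ‖fProd (uC c) d‖))).2 ε hε).exists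
  filter_upwards [Filter.eventually_ge_atTop (F.sup Finsupp.support)] with s hs
  have h1 : Summable fun d : {d : ℕ →₀ ℕ // d.support ⊆ s} => fProd (uC c) d.1 :=
    hTs.subtype _
  have h2 : Summable fun d : {d : ℕ →₀ ℕ // ¬ d.support ⊆ s} => fProd (uC c) d.1 :=
    hTs.subtype {d : ℕ →₀ ℕ | ¬ d.support ⊆ s}
  have hsplit :
      (∑' d : {d : ℕ →₀ ℕ // d.support ⊆ s}, fProd (uC c) d.1) +
        (∑' d : {d : ℕ →₀ ℕ // ¬ d.support ⊆ s}, fProd (uC c) d.1) =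
      ∑' d : ℕ →₀ ℕ, fProd (uC c) d :=
    Summable.tsum_add_tsum_compl (s := {d : ℕ →₀ ℕ | d.support ⊆ s}) h1 h2
  rw [dist_eq_norm, ← hsplit]
  have hbound : ‖∑' d : {d : ℕ →₀ ℕ // ¬ d.support ⊆ s}, fProd (uC c) d.1‖ ≤
      ∑' d : {x : ℕ →₀ ℕ // x ∉ F}, ‖fProd (uC c) d.1‖ := by
    refine le_trans (norm_tsum_le_tsum_norm (hT.subtype _)) ?_
    have hinj2 : Function.Injective
        (fun d : {d : ℕ →₀ ℕ // ¬ d.support ⊆ s} =>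
          (⟨d.1, fun hdF => d.2 (le_trans (Finset.le_sup hdF) hs)⟩ :
            {x : ℕ →₀ ℕ // x ∉ F})) := by
      intro x y hxy
      have h' := congrArg Subtype.val hxy
      exact Subtype.ext h'
    refine Summable.tsum_le_tsum_of_inj _ hinj2
      (fun _ _ => norm_nonneg _) (fun d => le_refl _)
      (hT.subtype _) (hT.subtype _)
  calc ‖(∑' d : {d : ℕ →₀ ℕ // d.support ⊆ s}, fProd (uC c) d.1) -
      ((∑' d : {d : ℕ →₀ ℕ // d.support ⊆ s}, fProd (uC c) d.1) +
        (∑' d : {d : ℕ →₀ ℕ // ¬ d.support ⊆ s}, fProd (uC c) d.1))‖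
      = ‖∑' d : {d : ℕ →₀ ℕ // ¬ d.support ⊆ s}, fProd (uC c) d.1‖ := by
        rw [sub_add_cancel_left, norm_neg]
    _ ≤ _ := hbound
    _ < ε := hF

lemma tsum_fProd_eq (hc : Summable fun n => ‖c n‖) :
    ∑' d : ℕ →₀ ℕ, fProd (uC c) d = Complex.exp (∑' n, c n) := by
  have h1 := tendsto_partial_sums c hc
  have h2 : ∀ s : Finset ℕ,
      (∑' d : {d : ℕ →₀ ℕ // d.support ⊆ s}, fProd (uC c) d.1)
        = Complex.exp (∑ i ∈ s, c i) := by
    intro s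
    rw [(hasSum_fProd (uC c) (uC_zero c) (uC_summable c) s).1.tsum_eq,
      Complex.exp_sum]
    exact Finset.prod_congr rfl fun i _ => uC_tsum c i
  have h3 : Tendsto (fun s : Finset ℕ => Complex.exp (∑ i ∈ s, c i))
      atTop (𝓝 (Complex.exp (∑' n, c n))) :=
    (Complex.continuous_exp.tendsto _).comp hc.of_norm.hasSum
  exact tendsto_nhds_unique h1 (h3.congr fun s => (h2 s).symm)
end Main

section Partitions

noncomputable def phiP (μ : Σ m : ℕ, m.Partition) : ℕ →₀ ℕ := μ.2.parts.toFinsupp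

lemma phiP_injective : Function.Injective phiP := by
  rintro ⟨m₁, p₁⟩ ⟨m₂, p₂⟩ hp
  have hparts : p₁.parts = p₂.parts := Multiset.toFinsupp.injective hp
  have hm : m₁ = m₂ := by rw [← p₁.parts_sum, ← p₂.parts_sum, hparts]
  subst hm
  exact congrArg _ (Nat.Partition.ext hparts)

lemma fProd_vanish (c : ℕ → ℂ) (hc0 : c 0 = 0) (d : ℕ →₀ ℕ)
    (hd : d ∉ Set.range phiP) : fProd (uC c) d = 0 := by
  by_cases h0 : d 0 = 0
  · exfalso
    apply hd
    refine ⟨⟨(Finsupp.toMultiset d).sum, ⟨Finsupp.toMultiset d, ?_, rfl⟩⟩, ?_⟩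
    · intro i hi
      have hi' : i ∈ d.support := (Finsupp.mem_toMultiset d i).1 hi
      have hne : i ≠ 0 := by
        intro h
        subst h
        exact (Finsupp.mem_support_iff.1 hi') h0
      exact Nat.pos_of_ne_zero hne
    · show Multiset.toFinsupp (Finsupp.toMultiset d) = d
      exact Finsupp.toMultiset_toFinsupp d
  · have h0' : (0 : ℕ) ∈ d.support := Finsupp.mem_support_iff.2 h0
    rw [fProd, Finsupp.prod]
    refine Finset.prod_eq_zero h0' ?_
    show uC c 0 (d 0) = 0
    simp [uC, hc0, zero_pow h0]

lemma term_eq (a b : ℕ → ℂ) (μ : Σ m : ℕ, m.Partition) :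
    partProd a μ.2 * partProd b μ.2 / (zPart μ.2 : ℂ)
      = fProd (uC (fun n => a n * b n / (n : ℂ))) (phiP μ) := by
  obtain ⟨m, p⟩ := μ
  show partProd a p * partProd b p / (zPart p : ℂ)
      = fProd (uC (fun n => a n * b n / (n : ℂ))) p.parts.toFinsupp
  have hz : ((zPart p : ℂ)) = ∏ i ∈ p.parts.toFinset,
      ((i : ℂ) ^ p.parts.count i * ((p.parts.count i).factorial : ℂ)) := by
    rw [zPart, Nat.cast_prod]
    exact Finset.prod_congr rfl fun i _ => by push_cast; ring
  rw [partProd, partProd, Finset.prod_multiset_map_count, Finset.prod_multiset_map_count,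
    hz, ← Finset.prod_mul_distrib, ← Finset.prod_div_distrib]
  show _ = (p.parts.toFinsupp).prod fun i e => uC (fun n => a n * b n / (n : ℂ)) i e
  rw [Finsupp.prod]
  refine Finset.prod_congr rfl fun i hi => ?_
  show a i ^ p.parts.count i * b i ^ p.parts.count i /
      ((i : ℂ) ^ p.parts.count i * ((p.parts.count i).factorial : ℂ))
    = uC (fun n => a n * b n / (n : ℂ)) i (p.parts.count i)
  rw [uC]
  rw [div_pow, mul_pow, div_div]

end Partitions

/-- coherent-state pairing formula: if
`∑_{n=1}^∞ |a_n b_n|/n < ∞`, then the family `(a_μ b_μ / z_μ)` indexed by all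
partitions of all nonnegative integers is summable, and
`∑_μ a_μ b_μ / z_μ = exp(∑_{n=1}^∞ a_n b_n / n)`. -/
theorem coherent_state_pairing (a b : ℕ → ℂ)
    (h : Summable fun n : ℕ => ‖a (n + 1) * b (n + 1)‖ / (n + 1)) :
    Summable (fun μ : Σ m : ℕ, m.Partition =>
      partProd a μ.2 * partProd b μ.2 / (zPart μ.2 : ℂ)) ∧
    ∑' μ : Σ m : ℕ, m.Partition, partProd a μ.2 * partProd b μ.2 / (zPart μ.2 : ℂ)
      = Complex.exp (∑' n : ℕ, a (n + 1) * b (n + 1) / (n + 1)) := by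
  set c : ℕ → ℂ := fun n => a n * b n / (n : ℂ) with hcdef
  have hc0 : c 0 = 0 := by simp [hcdef]
  have h1 : Summable fun n : ℕ => ‖c (n + 1)‖ := by
    refine h.congr fun n => ?_
    show ‖a (n + 1) * b (n + 1)‖ / ((n : ℝ) + 1) = ‖c (n + 1)‖
    rw [hcdef]
    simp only
    rw [norm_div]
    have hnn : ‖((n + 1 : ℕ) : ℂ)‖ = ((n + 1 : ℕ) : ℝ) := by
      rw [Complex.norm_natCast]
    rw [hnn]
    push_cast
    ring
  have hcnorm : Summable fun n => ‖c n‖ := (summable_nat_add_iff 1).1 h1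
  have hTnorm : Summable fun d : ℕ →₀ ℕ => ‖fProd (uC c) d‖ :=
    summable_norm_fProd c hcnorm
  have hTsum : Summable fun d : ℕ →₀ ℕ => fProd (uC c) d := hTnorm.of_norm
  have hterm : (fun μ : Σ m : ℕ, m.Partition =>
      partProd a μ.2 * partProd b μ.2 / (zPart μ.2 : ℂ))
      = (fun d : ℕ →₀ ℕ => fProd (uC c) d) ∘ phiP := funext fun μ => term_eq a b μ
  have hvan : ∀ d ∉ Set.range phiP, fProd (uC c) d = 0 :=
    fun d hd => fProd_vanish c hc0 d hd
  have hsummable : Summable (fun μ : Σ m : ℕ, m.Partition =>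
      partProd a μ.2 * partProd b μ.2 / (zPart μ.2 : ℂ)) := by
    rw [hterm]
    exact (phiP_injective.summable_iff hvan).2 hTsum
  refine ⟨hsummable, ?_⟩
  have hsupp : Function.support (fun d : ℕ →₀ ℕ => fProd (uC c) d) ⊆
      Set.range phiP := by
    intro d hd
    by_contra hdr
    exact hd (hvan d hdr)
  have htsum1 : ∑' μ : Σ m : ℕ, m.Partition,
      partProd a μ.2 * partProd b μ.2 / (zPart μ.2 : ℂ)
      = ∑' d : ℕ →₀ ℕ, fProd (uC c) d := by
    rw [hterm]
    exact phiP_injective.tsum_eq hsupp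
  rw [htsum1, tsum_fProd_eq c hcnorm]
  congr 1
  rw [Summable.tsum_eq_zero_add hcnorm.of_norm, hc0, zero_add]
  refine tsum_congr fun n => ?_
  rw [hcdef]
  push_cast
  ring
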